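/- arXiv:1001.3226 — 3 statements merged into one kernel-verified Lean document; each statement's English description precedes it below -/
import Mathlib

section
/- Let X_1, …, X_h ∈ R. (i) If f(X_i) = 0 for all i, then g(μ(X_1, …, X_h)) = 0. (ii) If the polynomial ∏_{c ∈ F_q^h} (T − (c_1X_1 + ⋯ + c_hX_h)) divides f(T) = πT + u_1T^q + ⋯ + u_{h−1}T^{q^{h−1}} + T^{q^h} in R[T], then this product equals f(T), μ(X_1, …, X_h)^{q−1} = (−1)^h π, and ∏_{a ∈ F_q} (T − a·μ(X_1, …, X_h)) = (−1)^{h−1} g(T) in R[T]. -/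
open Finset

noncomputable section

/-- The Moore determinant `μ(X₁, …, X_h) = det (Xᵢ^{q^{j-1}})`. -/
def moore (q : ℕ) {h : ℕ} {R : Type*} [CommRing R] (X : Fin h → R) : R :=
  Matrix.det (Matrix.of fun i j : Fin h => X i ^ q ^ (j : ℕ))

/-- `f(X) = πX + u₁X^q + ⋯ + u_{h−1}X^{q^{h−1}} + X^{q^h}`. -/
def fmap (q h : ℕ) {R : Type*} [CommRing R] (π : R) (u : ℕ → R) (X : R) : R :=
  π * X + (∑ k ∈ Finset.Ico 1 h, u k * X ^ q ^ k) + X ^ q ^ h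

/-- `g(T) = πT + (−1)^{h−1}T^q`. -/
def gmap (q h : ℕ) {R : Type*} [CommRing R] (π : R) (T : R) : R :=
  π * T + (-1) ^ (h - 1) * T ^ q

/-- `f(T)` as a polynomial in `R[T]`. -/
def fPoly (q h : ℕ) {R : Type*} [CommRing R] (π : R) (u : ℕ → R) : Polynomial R :=
  Polynomial.C π * Polynomial.X
    + (∑ k ∈ Finset.Ico 1 h, Polynomial.C (u k) * Polynomial.X ^ q ^ k)
    + Polynomial.X ^ q ^ h

/-- `g(T)` as a polynomial in `R[T]`. -/
def gPoly (q h : ℕ) {R : Type*} [CommRing R] (π : R) : Polynomial R :=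
  Polynomial.C π * Polynomial.X + Polynomial.C ((-1 : R) ^ (h - 1)) * Polynomial.X ^ q

/-!
(i) If `f (X i) = 0` for all `i`, the last column `(X i ^ q ^ h)` of the Frobenius twist of the
Moore matrix is `-π • (X i) - ∑ u k • (X i ^ q ^ k)`, a combination of columns of the Moore matrix
itself. By multilinearity of the determinant `μ ^ q = (-1) ^ h * π * μ`, which is `g μ = 0`.

(ii) Over `A = K[X₁, …, X_h]`, the polynomial `Δ(T) = μ(T, X₁, …, X_h) ∈ A[T]` has degree `q ^ h`,
leading coefficient `(-1) ^ h * μ` and linear coefficient `μ ^ q`, and it vanishes at the `q ^ h`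
distinct `K`-linear combinations of the `Xᵢ`. As `A` is a domain,
`Δ = (-1) ^ h * μ * ∏_c (T - ∑ cᵢ Xᵢ)`, and since `μ ≠ 0` the linear coefficient of the product is
`(-1) ^ h * μ ^ (q - 1)`. Specialising the `Xᵢ` and comparing with `f`, which has linear
coefficient `π` and is the product because both are monic of degree `q ^ h`, gives
`μ ^ (q - 1) = (-1) ^ h * π`. The last identity is `∏_a (T - a μ) = T ^ q - μ ^ (q - 1) T`,
again obtained from its universal case in `K[Y][T]`.
-/

theorem neg_one_pow_mul_neg_one_pow {R : Type*} [Monoid R] [HasDistribNeg R] (n : ℕ) :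
    ((-1 : R) ^ n) * (-1) ^ n = 1 := by
  rw [← pow_add]
  exact Even.neg_one_pow ⟨n, rfl⟩

open Polynomial

theorem Polynomial.eq_C_mul_prod_X_sub_C_of_isRoot {A : Type*} [CommRing A] [IsDomain A]
    {ι : Type*} [Fintype ι] {r : ι → A} (hr : Function.Injective r) {f : A[X]}
    (hdeg : f.natDegree ≤ Fintype.card ι) (hroot : ∀ i, f.IsRoot (r i)) :
    f = C (f.coeff (Fintype.card ι)) * ∏ i, (X - C (r i)) := by
  rcases eq_or_ne f 0 with rfl | hf
  · simp
  have hle : Finset.univ.val.map r ≤ f.roots := by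
    rw [Multiset.le_iff_subset (Finset.univ.nodup.map hr)]
    intro a ha
    obtain ⟨i, -, rfl⟩ := Multiset.mem_map.mp ha
    exact (mem_roots hf).mpr (hroot i)
  have hcard : Multiset.card (Finset.univ.val.map r) = Fintype.card ι := by simp
  have hroots : Finset.univ.val.map r = f.roots :=
    Multiset.eq_of_le_of_card_le hle (by rw [hcard]; exact (card_roots' f).trans hdeg)
  have hnat : f.natDegree = Fintype.card ι :=
    le_antisymm hdeg (hcard ▸ (Multiset.card_le_card hle).trans (card_roots' f))
  conv_lhs =>
    rw [← C_leadingCoeff_mul_prod_multiset_X_sub_C (p := f) (hroots ▸ hcard.trans hnat.symm)]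
  rw [← hroots, Multiset.map_map, leadingCoeff, hnat]
  rfl

theorem RingHom.map_moore {R S : Type*} [CommRing R] [CommRing S] (f : R →+* S) (q : ℕ) {n : ℕ}
    (X : Fin n → R) : f (moore q X) = moore q (f ∘ X) := by
  simp only [moore, RingHom.map_det]
  congr 1
  ext i j
  simp

section LaplaceExpansion

variable {A : Type*} [CommRing A] {q : ℕ}

theorem moore_cons_X_eq_sum {n : ℕ} (Y : Fin n → A) :
    moore q (Fin.cons X (fun i => C (Y i)) : Fin (n + 1) → A[X]) =
      ∑ j : Fin (n + 1), C ((-1) ^ (j : ℕ) *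
        (Matrix.of fun i k : Fin n => Y i ^ q ^ (j.succAbove k : ℕ)).det) * X ^ q ^ (j : ℕ) := by
  rw [moore, Matrix.det_succ_row_zero]
  refine Finset.sum_congr rfl fun j _ => ?_
  have hminor : (Matrix.of fun i (k : Fin (n + 1)) =>
      (Fin.cons X (fun i => C (Y i)) : Fin (n + 1) → A[X]) i ^ q ^ (k : ℕ)).submatrix
        Fin.succ j.succAbove =
      (C : A →+* A[X]).mapMatrix (Matrix.of fun i k : Fin n => Y i ^ q ^ (j.succAbove k : ℕ)) := by
    ext i k
    simp
  rw [hminor, ← RingHom.map_det]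
  simp only [Matrix.of_apply, Fin.cons_zero, map_mul, map_pow, map_neg, map_one]
  ring

theorem coeff_moore_cons_X (hq : 2 ≤ q) {n : ℕ} (Y : Fin n → A) (j : Fin (n + 1)) :
    (moore q (Fin.cons X (fun i => C (Y i)) : Fin (n + 1) → A[X])).coeff (q ^ (j : ℕ)) =
      (-1) ^ (j : ℕ) * (Matrix.of fun i k : Fin n => Y i ^ q ^ (j.succAbove k : ℕ)).det := by
  have hinj : Function.Injective fun j : Fin (n + 1) => q ^ (j : ℕ) :=
    (Nat.pow_right_injective hq).comp Fin.val_injective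
  rw [moore_cons_X_eq_sum, finsetSum_coeff, Finset.sum_eq_single j]
  · rw [coeff_C_mul_X_pow, if_pos rfl]
  · intro k _ hkj
    rw [coeff_C_mul_X_pow, if_neg fun h => hkj (hinj h).symm]
  · simp

theorem natDegree_moore_cons_X_le (hq : 1 ≤ q) {n : ℕ} (Y : Fin n → A) :
    (moore q (Fin.cons X (fun i => C (Y i)) : Fin (n + 1) → A[X])).natDegree ≤ q ^ n := by
  rw [moore_cons_X_eq_sum]
  refine natDegree_sum_le_of_forall_le _ _ fun j _ => (natDegree_C_mul_X_pow_le _ _).trans ?_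
  exact Nat.pow_le_pow_right hq (Nat.lt_succ_iff.mp j.isLt)

theorem coeff_moore_cons_X_pow_last (hq : 2 ≤ q) {n : ℕ} (Y : Fin n → A) :
    (moore q (Fin.cons X (fun i => C (Y i)) : Fin (n + 1) → A[X])).coeff (q ^ n) =
      (-1) ^ n * moore q Y := by
  simpa [moore] using coeff_moore_cons_X hq Y (Fin.last n)

theorem coeff_moore_cons_X_one (hq : 2 ≤ q) {n : ℕ} (Y : Fin n → A) :
    (moore q (Fin.cons X (fun i => C (Y i)) : Fin (n + 1) → A[X])).coeff 1 =
      moore q (fun i => Y i ^ q) := by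
  have := coeff_moore_cons_X hq Y 0
  simp only [Fin.val_zero, pow_zero, one_mul, Fin.succAbove_zero, Fin.val_succ] at this
  rw [this, moore]
  congr 1
  ext i k
  simp only [Matrix.of_apply]
  ring

end LaplaceExpansion

theorem moore_X_ne_zero (K : Type*) [CommRing K] [Nontrivial K] {q : ℕ} (hq : 2 ≤ q) (n : ℕ) :
    moore q (MvPolynomial.X : Fin n → MvPolynomial (Fin n) K) ≠ 0 := by
  induction n with
  | zero => simp [moore]
  | succ n ih =>
    intro h0
    set φ : MvPolynomial (Fin (n + 1)) K →+* (MvPolynomial (Fin n) K)[X] :=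
      (MvPolynomial.finSuccEquiv K n).toRingEquiv.toRingHom
    have hsplit : φ ∘ MvPolynomial.X = Fin.cons X (fun i => C (MvPolynomial.X i)) := by
      ext1 i
      cases i using Fin.cases <;>
        simp [φ, MvPolynomial.finSuccEquiv_X_zero, MvPolynomial.finSuccEquiv_X_succ]
    have hcoeff := congrArg (coeff · (q ^ n)) (φ.map_moore q MvPolynomial.X)
    simp only [h0, map_zero, coeff_zero, hsplit, coeff_moore_cons_X_pow_last hq] at hcoeff
    exact ih (((isUnit_neg_one (α := MvPolynomial (Fin n) K)).pow n).mul_right_eq_zero.mp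
      hcoeff.symm)

section FiniteFieldAlgebra

variable {K R : Type*} [Field K] [Fintype K] [CommRing R] [Algebra K R] {q : ℕ}

theorem pow_card_pow_sum_smul (hq : Fintype.card K = q) {ι : Type*} (s : Finset ι) (c : ι → K)
    (Y : ι → R) (k : ℕ) : (∑ i ∈ s, c i • Y i) ^ q ^ k = ∑ i ∈ s, c i • Y i ^ q ^ k := by
  subst hq
  have hfrob : ∀ x : R, (FiniteField.frobeniusAlgHom K R ^ k) x = x ^ Fintype.card K ^ k := by
    intro x
    rw [AlgHom.coe_pow, FiniteField.coe_frobeniusAlgHom, pow_iterate]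
  simp only [← hfrob, map_sum, map_smul]

theorem moore_pow_card (hq : Fintype.card K = q) {n : ℕ} (X : Fin n → R) :
    moore q X ^ q = moore q (fun i => X i ^ q) := by
  subst hq
  exact (FiniteField.frobeniusAlgHom K R).toRingHom.map_moore _ X

theorem moore_cons_sum_smul_eq_zero (hq : Fintype.card K = q) {n : ℕ} (Y : Fin n → R)
    (c : Fin n → K) : moore q (Fin.cons (∑ i, c i • Y i) Y : Fin (n + 1) → R) = 0 := by
  set M : Matrix (Fin (n + 1)) (Fin (n + 1)) R :=
    Matrix.of fun i j => (Fin.cons (∑ i, c i • Y i) Y : Fin (n + 1) → R) i ^ q ^ (j : ℕ)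
  set c' : Fin (n + 1) → R := Fin.cons 0 fun i => algebraMap K R (c i)
  have hrow : ∑ k, c' k • M k = M 0 := by
    ext j
    simp [M, c', Fin.sum_univ_succ, pow_card_pow_sum_smul hq, ← Algebra.smul_def]
  have := M.det_updateRow_sum 0 c'
  rwa [hrow, Matrix.updateRow_eq_self, show c' 0 = 0 from rfl, zero_smul] at this

theorem gmap_moore_eq_zero {h : ℕ} (hq : Fintype.card K = q) (hh : 1 ≤ h) (π : R) (u : ℕ → R)
    (X : Fin h → R) (hX : ∀ i, fmap q h π u (X i) = 0) : gmap q h π (moore q X) = 0 := by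
  obtain ⟨m, rfl⟩ : ∃ m, h = m + 1 := ⟨h - 1, by omega⟩
  have hlast (i : Fin (m + 1)) : X i ^ q ^ (m + 1) =
      ∑ k : Fin m, -u (k + 1) * X i ^ q ^ (k + 1 : ℕ) + -π * X i := by
    have := hX i
    rw [fmap, Finset.sum_Ico_eq_sum_range, Nat.add_sub_cancel,
      ← Fin.sum_univ_eq_sum_range (fun k => u (1 + k) * X i ^ q ^ (1 + k))] at this
    simp only [add_comm 1] at this
    simp only [neg_mul, Finset.sum_neg_distrib]
    linear_combination this
  set M : Matrix (Fin (m + 1)) (Fin (m + 1)) R := Matrix.of fun i j => X i ^ q ^ (j : ℕ)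
  -- the columns of `D` are `X ^ q, …, X ^ q ^ m, X`
  set D := M.submatrix id (finRotate (m + 1))
  have hD : D.det = (-1) ^ m * moore q X := by
    simp [D, Matrix.det_permute', sign_finRotate, moore, M]
  set c : Fin (m + 1) → R := Fin.snoc (fun k : Fin m => -u (k + 1)) (-π)
  have hshift : (Matrix.of fun i j : Fin (m + 1) => (X i ^ q) ^ q ^ (j : ℕ)) =
      D.updateCol (Fin.last m) (fun i => ∑ k, c k • D i k) := by
    ext i j
    cases j using Fin.lastCases with
    | last => simp [D, M, c, Fin.sum_univ_castSucc, hlast, ← pow_mul, ← pow_succ']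
    | cast k =>
      simp [D, M, Fin.castSucc_ne_last, ← pow_mul, ← pow_succ']
  have hpow : moore q X ^ q = -π * ((-1) ^ m * moore q X) := by
    rw [moore_pow_card hq, moore, hshift, Matrix.det_updateCol_sum, hD]
    simp [c]
  rw [gmap, Nat.add_sub_cancel, hpow]
  linear_combination -(π * moore q X) * neg_one_pow_mul_neg_one_pow (R := R) m

theorem coeff_one_prod_X_sub_C_sum_smul_X (hq : Fintype.card K = q) (n : ℕ) :
    (∏ c : Fin n → K, (X - C (∑ i, c i • MvPolynomial.X i) : (MvPolynomial (Fin n) K)[X])).coeff 1 =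
      (-1) ^ n * moore q (MvPolynomial.X : Fin n → MvPolynomial (Fin n) K) ^ (q - 1) := by
  set Y : Fin n → MvPolynomial (Fin n) K := MvPolynomial.X
  set μ := moore q Y
  have hq2 : 2 ≤ q := hq ▸ Fintype.one_lt_card
  have hinj : Function.Injective fun c : Fin n → K => ∑ i, c i • Y i := fun c c' h =>
    funext (Fintype.linearIndependent_iffₛ.mp (MvPolynomial.linearIndependent_X (Fin n) K) c c' h)
  have hroot (c : Fin n → K) :
      (moore q (Fin.cons X (fun i => C (Y i)))).IsRoot (∑ i, c i • Y i) := by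
    rw [IsRoot, ← coe_evalRingHom, RingHom.map_moore, Fin.comp_cons]
    simpa [Function.comp_def] using moore_cons_sum_smul_eq_zero hq Y c
  have hcard : Fintype.card (Fin n → K) = q ^ n := by simp [hq]
  have hfactor := eq_C_mul_prod_X_sub_C_of_isRoot hinj
    (hcard ▸ natDegree_moore_cons_X_le (by omega) Y) hroot
  rw [hcard, coeff_moore_cons_X_pow_last hq2] at hfactor
  have hcoeff := congrArg (coeff · 1) hfactor
  simp only [coeff_moore_cons_X_one hq2, ← moore_pow_card hq, coeff_C_mul] at hcoeff
  have hpow : μ ^ q = μ * μ ^ (q - 1) := by rw [← pow_succ', Nat.sub_add_cancel (by omega)]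
  refine mul_left_cancel₀ (moore_X_ne_zero K hq2 n) ?_
  linear_combination -(-1) ^ n * hcoeff + (-1) ^ n * hpow -
    μ * (∏ c : Fin n → K, (X - C (∑ i, c i • Y i))).coeff 1 *
      neg_one_pow_mul_neg_one_pow (R := MvPolynomial (Fin n) K) n

theorem coeff_one_prod_X_sub_C_sum_smul (hq : Fintype.card K = q) {n : ℕ} (Y : Fin n → R) :
    (∏ c : Fin n → K, (X - C (∑ i, c i • Y i))).coeff 1 = (-1) ^ n * moore q Y ^ (q - 1) := by
  set φ : MvPolynomial (Fin n) K →+* R := (MvPolynomial.aeval Y).toRingHom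
  have hmap : ∏ c : Fin n → K, (X - C (∑ i, c i • Y i)) =
      Polynomial.map φ (∏ c : Fin n → K, (X - C (∑ i, c i • MvPolynomial.X i))) := by
    simp only [Polynomial.map_prod, Polynomial.map_sub, Polynomial.map_X, Polynomial.map_C]
    simp [φ]
  have hφ : φ ∘ MvPolynomial.X = Y := funext fun i => MvPolynomial.aeval_X Y i
  rw [hmap, coeff_map, coeff_one_prod_X_sub_C_sum_smul_X hq, map_mul, map_pow, map_pow, map_neg,
    map_one, φ.map_moore, hφ]

theorem prod_X_sub_C_smul_X (hq : Fintype.card K = q) :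
    ∏ a : K, (X - C (a • X) : K[X][X]) = X ^ q - C (X ^ (q - 1)) * X := by
  subst hq
  have hq2 : 2 ≤ Fintype.card K := Fintype.one_lt_card
  have hroot (a : K) : (X ^ Fintype.card K - C (X ^ (Fintype.card K - 1)) * X : K[X][X]).IsRoot
      (a • X) := by
    rw [IsRoot, eval_sub, eval_mul, eval_pow, eval_C, eval_X, _root_.smul_pow,
      FiniteField.pow_card, mul_smul_comm, ← pow_succ, Nat.sub_add_cancel (by omega), sub_self]
  have hdeg : (X ^ Fintype.card K - C (X ^ (Fintype.card K - 1)) * X : K[X][X]).natDegree ≤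
      Fintype.card K := by
    compute_degree
    omega
  have hcoeff : (X ^ Fintype.card K - C (X ^ (Fintype.card K - 1)) * X : K[X][X]).coeff
      (Fintype.card K) = 1 := by
    rw [coeff_sub, coeff_X_pow_self, coeff_C_mul, coeff_X_of_ne_one (by omega), mul_zero,
      sub_zero]
  rw [eq_C_mul_prod_X_sub_C_of_isRoot (smul_left_injective K X_ne_zero) hdeg hroot,
    hcoeff, map_one, one_mul]

theorem prod_X_sub_C_smul (hq : Fintype.card K = q) (y : R) :
    ∏ a : K, (X - C (a • y)) = X ^ q - C (y ^ (q - 1)) * X := by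
  have := congrArg (Polynomial.map (aeval y).toRingHom) (prod_X_sub_C_smul_X hq)
  simpa [Polynomial.map_prod] using this

end FiniteFieldAlgebra

section DrinfeldPolynomial

variable {R : Type*} [CommRing R] {q h : ℕ} (π : R) (u : ℕ → R)

theorem degree_fPoly_sub_X_pow_lt (hq : 2 ≤ q) (hh : 1 ≤ h) :
    (fPoly q h π u - X ^ q ^ h).degree < ↑(q ^ h) := by
  have hlow : (fPoly q h π u - X ^ q ^ h).natDegree ≤ q ^ (h - 1) := by
    rw [fPoly, add_sub_cancel_right]
    refine natDegree_add_le_of_degree_le ((natDegree_C_mul_le _ _).trans ?_)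
      (natDegree_sum_le_of_forall_le _ _ fun k hk => (natDegree_C_mul_X_pow_le _ _).trans ?_)
    · exact natDegree_X_le.trans (Nat.one_le_pow _ _ (by omega))
    · exact Nat.pow_le_pow_right (by omega) (by simp at hk; omega)
  exact degree_le_natDegree.trans_lt
    (by exact_mod_cast hlow.trans_lt (Nat.pow_lt_pow_right (by omega) (by omega)))

theorem fPoly_monic (hq : 2 ≤ q) (hh : 1 ≤ h) : (fPoly q h π u).Monic := by
  simpa using monic_X_pow_add (degree_fPoly_sub_X_pow_lt π u hq hh)

theorem natDegree_fPoly_le (hq : 2 ≤ q) (hh : 1 ≤ h) : (fPoly q h π u).natDegree ≤ q ^ h := by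
  rw [← sub_add_cancel (fPoly q h π u) (X ^ q ^ h)]
  exact natDegree_add_le_of_degree_le
    (natDegree_le_of_degree_le (degree_fPoly_sub_X_pow_lt π u hq hh).le) (natDegree_X_pow_le _)

theorem coeff_one_fPoly (hq : 2 ≤ q) (hh : 1 ≤ h) : (fPoly q h π u).coeff 1 = π := by
  have hne (k : ℕ) (hk : 1 ≤ k) : 1 ≠ q ^ k := (Nat.one_lt_pow (by omega) (by omega)).ne
  simp only [fPoly, coeff_add, coeff_C_mul_X, finsetSum_coeff, coeff_C_mul_X_pow, coeff_X_pow]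
  rw [Finset.sum_eq_zero fun k hk => if_neg (hne k (Finset.mem_Ico.mp hk).1), if_neg (hne h hh)]
  simp

end DrinfeldPolynomial

theorem moore_of_torsion_and_drinfeld_basis_general
    (q h : ℕ) (hh : 1 ≤ h)
    (K : Type*) [Field K] [Fintype K] (hK : Fintype.card K = q)
    (R : Type*) [CommRing R] [Algebra K R]
    (π : R) (u : ℕ → R) (X : Fin h → R) :
    ((∀ i, fmap q h π u (X i) = 0) → gmap q h π (moore q X) = 0)
    ∧
    ((∏ c : Fin h → K,
        (Polynomial.X - Polynomial.C (∑ i, algebraMap K R (c i) * X i))) ∣ fPoly q h π u →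
      ((∏ c : Fin h → K,
          (Polynomial.X - Polynomial.C (∑ i, algebraMap K R (c i) * X i))) = fPoly q h π u
        ∧ moore q X ^ (q - 1) = (-1) ^ h * π
        ∧ (∏ a : K, (Polynomial.X - Polynomial.C (algebraMap K R a * moore q X)))
            = Polynomial.C ((-1 : R) ^ (h - 1)) * gPoly q h π)) := by
  nontriviality R
  have hq : 2 ≤ q := hK ▸ Fintype.one_lt_card
  simp only [← Algebra.smul_def]
  refine ⟨gmap_moore_eq_zero hK hh π u X, fun hdvd => ?_⟩
  have hP : ∏ c : Fin h → K, (Polynomial.X - C (∑ i, c i • X i)) = fPoly q h π u := by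
    refine (eq_of_monic_of_dvd_of_natDegree_le (monic_prod_of_monic _ _ fun _ _ => monic_X_sub_C _)
      (fPoly_monic π u hq hh) hdvd ?_).symm
    rw [natDegree_finsetProd_X_sub_C_eq_card, Finset.card_univ, Fintype.card_fun, Fintype.card_fin,
      hK]
    exact natDegree_fPoly_le π u hq hh
  have hcoeff := coeff_one_prod_X_sub_C_sum_smul hK X
  rw [hP, coeff_one_fPoly π u hq hh] at hcoeff
  have hμ : moore q X ^ (q - 1) = (-1) ^ h * π := by
    linear_combination (-(-1) ^ h) * hcoeff -
      moore q X ^ (q - 1) * neg_one_pow_mul_neg_one_pow (R := R) h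
  refine ⟨hP, hμ, ?_⟩
  obtain ⟨m, rfl⟩ : ∃ m, h = m + 1 := ⟨h - 1, by omega⟩
  rw [prod_X_sub_C_smul hK, hμ, gPoly, Nat.add_sub_cancel]
  simp only [map_mul, map_pow, map_neg, map_one]
  linear_combination -(Polynomial.X ^ q : R[X]) * neg_one_pow_mul_neg_one_pow (R := R[X]) m

/-- (i) If `f(Xᵢ) = 0` for all `i`, then `g(μ(X₁, …, X_h)) = 0`.
(ii) If `∏_{c ∈ F_q^h} (T − (c₁X₁ + ⋯ + c_hX_h))` divides `f(T)` in `R[T]`, then this product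
equals `f(T)`, `μ(X₁, …, X_h)^{q−1} = (−1)^h π`, and
`∏_{a ∈ F_q} (T − a·μ(X₁, …, X_h)) = (−1)^{h−1} g(T)` in `R[T]`. -/
theorem moore_of_torsion_and_drinfeld_basis
    (p e q h : ℕ) (hp : p.Prime) (he : 1 ≤ e) (hq : q = p ^ e) (hh : 1 ≤ h)
    (K : Type*) [Field K] [Fintype K] [DecidableEq K] (hK : Fintype.card K = q)
    (R : Type*) [CommRing R] [Algebra K R]
    (π : R) (u : ℕ → R) (X : Fin h → R) :
    ((∀ i, fmap q h π u (X i) = 0) → gmap q h π (moore q X) = 0)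
    ∧
    ((∏ c : Fin h → K,
        (Polynomial.X - Polynomial.C (∑ i, algebraMap K R (c i) * X i))) ∣ fPoly q h π u →
      ((∏ c : Fin h → K,
          (Polynomial.X - Polynomial.C (∑ i, algebraMap K R (c i) * X i))) = fPoly q h π u
        ∧ moore q X ^ (q - 1) = (-1) ^ h * π
        ∧ (∏ a : K, (Polynomial.X - Polynomial.C (algebraMap K R a * moore q X)))
            = Polynomial.C ((-1 : R) ^ (h - 1)) * gPoly q h π)) :=
  moore_of_torsion_and_drinfeld_basis_general q h hh K hK R π u X
end
end

section
/- Let n ≥ 2 and suppose X_1, …, X_h ∈ R satisfy f^{(n)}(X_i) = 0 for all i. Then g(μ_n(X_1, …, X_h)) = μ_{n−1}(f(X_1), …, f(X_h)). -/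
open Finset

noncomputable section

/-- `μ_n(X₁, …, X_h) = Σ μ(f^(a₁)(X₁), …, f^(a_h)(X_h))`, the sum over all tuples
`(a₁, …, a_h)` with `0 ≤ aᵢ ≤ n−1` and `a₁ + ⋯ + a_h = (h−1)(n−1)`. -/
def mooreN (q h n : ℕ) {R : Type*} [CommRing R] (π : R) (u : ℕ → R) (X : Fin h → R) : R :=
  ∑ a ∈ Finset.univ.filter
      (fun a : Fin h → Fin n => ∑ i, (a i : ℕ) = (h - 1) * (n - 1)),
    moore q (fun i => (fmap q h π u)^[(a i : ℕ)] (X i))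

/-!
As `K` has `q` elements, `x ↦ x ^ q` is additive on `R`, hence so is `g`, and `g(μ_n)` is the sum
of the `g(μ(f^(a₁)(X₁), …))`. Expanding `f(Y) = πY + Σ uₖ Y^{qᵏ} + Y^{q^h}` in the first column
shows that `g(μ(Y))` is the Moore determinant with first column `f(Yᵢ)`: the `π`-term gives `πμ`,
the middle terms repeat other columns, and the last term is `μ^q` with its columns rotated.

In the Leibniz expansion of that determinant, the term of a permutation `σ` applies `f` once more
to row `σ 0` only. For fixed `σ`, the tuples `a + e_{σ 0}` with `a` in the index set of `μ_n`
are exactly the tuples `b + 1` with `b` in the index set of `μ_{n-1}`, together with tuples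
whose coordinate `σ 0` equals `n`; the latter contribute nothing since `f^(n)(Xᵢ) = 0`.
-/

def weightTuples (h n : ℕ) : Finset (Fin h → Fin n) :=
  univ.filter fun a => ∑ i, (a i : ℕ) = (h - 1) * (n - 1)

section Combinatorics

variable {h n : ℕ}

theorem one_le_of_mem_weightTuples {a : Fin h → Fin n} (ha : a ∈ weightTuples h n)
    {i₀ j : Fin h} (hi₀ : (a i₀ : ℕ) < n - 1) (hj : j ≠ i₀) : 1 ≤ (a j : ℕ) := by
  rw [weightTuples, mem_filter, ← add_sum_erase _ _ (mem_univ j)] at ha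
  have hlt : ∑ i ∈ univ.erase j, (a i : ℕ) < ∑ _i ∈ univ.erase j, (n - 1) :=
    sum_lt_sum (fun i _ => Nat.le_sub_one_of_lt (a i).isLt)
      ⟨i₀, mem_erase.2 ⟨hj.symm, mem_univ _⟩, hi₀⟩
  rw [sum_const, card_erase_of_mem (mem_univ j), card_univ, Fintype.card_fin,
    smul_eq_mul] at hlt
  omega

theorem sum_add_card_eq_of_add_one_eq {a b : Fin h → ℕ} {i₀ : Fin h}
    (hab : ∀ i, b i + 1 = a i + if i = i₀ then 1 else 0) :
    ∑ i, b i + h = ∑ i, a i + 1 := by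
  have := sum_congr rfl fun i (_ : i ∈ univ) => hab i
  simpa [sum_add_distrib] using this

theorem sum_weightTuples_add_single {M : Type*} [AddCommMonoid M] (hn : 2 ≤ n) (i₀ : Fin h)
    (F : (Fin h → ℕ) → M) (hF : ∀ c, c i₀ = n → F c = 0) :
    ∑ a ∈ weightTuples h n, F (fun i => a i + if i = i₀ then 1 else 0)
      = ∑ b ∈ weightTuples h (n - 1), F (fun i => b i + 1) := by
  have hmul : (h - 1) * (n - 1) = (h - 1) * (n - 1 - 1) + (h - 1) := by
    rw [← Nat.mul_succ]; congr 1; omega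
  have hh : 1 ≤ h := i₀.pos
  rw [← sum_filter_of_ne (p := fun a : Fin h → Fin n => (a i₀ : ℕ) < n - 1)]
  swap
  · intro a _ hne
    by_contra hlt
    have := (a i₀).isLt
    exact hne (hF _ (by simp only [if_pos]; omega))
  have hshift (a : Fin h → Fin n)
      (ha : a ∈ (weightTuples h n).filter fun a => (a i₀ : ℕ) < n - 1) (i : Fin h) :
      1 ≤ (a i : ℕ) + if i = i₀ then 1 else 0 := by
    rw [mem_filter] at ha
    split_ifs with hi
    · omega
    · exact one_le_of_mem_weightTuples ha.1 ha.2 hi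
  refine sum_bij'
    (fun a ha i => ⟨(a i : ℕ) + (if i = i₀ then 1 else 0) - 1, ?_⟩)
    (fun b _ i => ⟨(b i : ℕ) + 1 - if i = i₀ then 1 else 0, ?_⟩) ?_ ?_ ?_ ?_ ?_
  · have := (a i).isLt
    have := (mem_filter.1 ha).2
    split_ifs with hi
    · subst hi; omega
    · omega
  · have := (b i).isLt
    split_ifs <;> omega
  · intro a ha
    have := sum_add_card_eq_of_add_one_eq (a := fun i => (a i : ℕ)) (i₀ := i₀)
      (b := fun i => (a i : ℕ) + (if i = i₀ then 1 else 0) - 1)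
      (fun i => Nat.sub_add_cancel (hshift a ha i))
    simp only [weightTuples, mem_filter, mem_univ, true_and] at ha ⊢
    omega
  · intro b hb
    have := sum_add_card_eq_of_add_one_eq (b := fun i => (b i : ℕ)) (i₀ := i₀)
      (a := fun i => (b i : ℕ) + 1 - if i = i₀ then 1 else 0)
      (fun i => by split_ifs <;> omega)
    simp only [weightTuples, mem_filter, mem_univ, true_and, if_pos] at hb ⊢
    exact ⟨by omega, (b i₀).isLt⟩
  · intro a ha
    funext i
    have := hshift a ha i
    ext
    simp only
    split_ifs at this ⊢ <;> omega
  · intro b _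
    funext i
    ext
    simp only
    split_ifs <;> omega
  · intro a ha
    congr 1
    funext i
    have := hshift a ha i
    simp only
    omega

end Combinatorics

section Frobenius

variable {R : Type*} [CommRing R]

def mooreMatrix (q : ℕ) {h : ℕ} (Y : Fin h → R) : Matrix (Fin h) (Fin h) R :=
  Matrix.of fun i j => Y i ^ q ^ (j : ℕ)

theorem fmap_eq_sum_range {h : ℕ} (hh : 0 < h) (q : ℕ) (π : R) (u : ℕ → R) (y : R) :
    fmap q h π u y = ∑ k ∈ range h, Function.update u 0 π k * y ^ q ^ k + y ^ q ^ h := by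
  rw [sum_range_eq_add_Ico _ hh, Function.update_self, pow_zero, pow_one, fmap]
  congr 2
  exact sum_congr rfl fun k hk => by rw [Function.update_of_ne (by grind)]

variable (K : Type*) [Field K] [Fintype K] [Algebra K R]

local notation "q" => Fintype.card K

theorem gmap_sum (h : ℕ) (π : R) {ι : Type*} (s : Finset ι) (F : ι → R) :
    gmap q h π (∑ x ∈ s, F x) = ∑ x ∈ s, gmap q h π (F x) := by
  have frob (x : R) : x ^ q = FiniteField.frobeniusAlgHom K R x := rfl
  simp only [gmap, frob, map_sum, mul_sum, sum_add_distrib]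

theorem det_updateCol_zero_mooreMatrix {h : ℕ} [NeZero h] (Y : Fin h → R) :
    ((mooreMatrix q Y).updateCol 0 fun i => Y i ^ q ^ h).det
      = (-1) ^ (h - 1) * moore q Y ^ q := by
  have frob (x : R) : x ^ q = FiniteField.frobeniusAlgHom K R x := rfl
  have hrot : (mooreMatrix q Y).updateCol 0 (fun i => Y i ^ q ^ h)
      = ((mooreMatrix q Y).map (FiniteField.frobeniusAlgHom K R)).submatrix id
          (finRotate h).symm := by
    ext i j
    rcases eq_or_ne j 0 with rfl | hj
    · obtain ⟨m, rfl⟩ := Nat.exists_eq_succ_of_ne_zero (NeZero.ne h)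
      simp [mooreMatrix, ← pow_mul, ← pow_succ]
    · simp [mooreMatrix, hj, ← pow_mul, ← pow_succ, Fin.val_sub_one_of_ne_zero,
        Nat.sub_one_add_one (Fin.val_ne_zero_iff.2 hj)]
  rw [hrot, Matrix.det_permute', Equiv.Perm.sign_symm, sign_finRotate, frob, moore,
    AlgHom.map_det]
  push_cast
  rfl

theorem gmap_moore {h : ℕ} [NeZero h] (π : R) (u : ℕ → R) (Y : Fin h → R) :
    gmap q h π (moore q Y)
      = ((mooreMatrix q Y).updateCol 0 fun i => fmap q h π u (Y i)).det := by
  have hcol : (fun i => fmap q h π u (Y i))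
      = (fun i => ∑ j : Fin h, Function.update u 0 π j • mooreMatrix q Y i j)
        + fun i => Y i ^ q ^ h := by
    funext i
    simp [fmap_eq_sum_range (NeZero.pos h), ← Fin.sum_univ_eq_sum_range, mooreMatrix]
  rw [hcol, Matrix.det_updateCol_add, Matrix.det_updateCol_sum,
    det_updateCol_zero_mooreMatrix, gmap, moore]
  simp [mooreMatrix]

end Frobenius

theorem gmap_mooreN_general
    (q h n : ℕ) (hh : 1 ≤ h) (hn : 2 ≤ n)
    (K : Type*) [Field K] [Fintype K] (hK : Fintype.card K = q)
    (R : Type*) [CommRing R] [Algebra K R]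
    (π : R) (u : ℕ → R) (X : Fin h → R)
    (hX : ∀ i, (fmap q h π u)^[n] (X i) = 0) :
    gmap q h π (mooreN q h n π u X)
      = mooreN q h (n - 1) π u (fun i => fmap q h π u (X i)) := by
  subst hK
  have : NeZero h := ⟨by omega⟩
  change gmap _ h π (∑ a ∈ weightTuples h n, _) = ∑ b ∈ weightTuples h (n - 1), _
  set f := fmap (Fintype.card K) h π u
  let F (σ : Equiv.Perm (Fin h)) (c : Fin h → ℕ) : R :=
    ∏ j, (f^[c (σ j)] (X (σ j))) ^ Fintype.card K ^ (j : ℕ)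
  have hF (σ : Equiv.Perm (Fin h)) (c : Fin h → ℕ) (hc : c (σ 0) = n) : F σ c = 0 :=
    prod_eq_zero (mem_univ 0) (by simp [hc, hX])
  have hlhs (a : Fin h → Fin n) :
      gmap (Fintype.card K) h π (moore (Fintype.card K) fun i => f^[a i] (X i)) =
        ∑ σ : Equiv.Perm (Fin h), σ.sign • F σ (fun i => a i + if i = σ 0 then 1 else 0) := by
    rw [gmap_moore K π u, Matrix.det_apply]
    refine sum_congr rfl fun σ _ => congrArg _ (prod_congr rfl fun j _ => ?_)
    rcases eq_or_ne j 0 with rfl | hj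
    · simp [mooreMatrix, Function.iterate_succ_apply', f]
    · simp [mooreMatrix, hj, σ.injective.eq_iff]
  have hrhs (b : Fin h → Fin (n - 1)) :
      moore (Fintype.card K) (fun i => f^[b i] (f (X i))) =
        ∑ σ : Equiv.Perm (Fin h), σ.sign • F σ (fun i => b i + 1) := by
    rw [moore, Matrix.det_apply]
    simp [F, Function.iterate_succ_apply]
  simp only [gmap_sum, hlhs, hrhs]
  rw [sum_comm, sum_comm (s := weightTuples h (n - 1))]
  refine sum_congr rfl fun σ _ => ?_
  rw [← smul_sum, ← smul_sum, sum_weightTuples_add_single hn (σ 0) (F σ) (hF σ)]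

/-- Let `n ≥ 2` and suppose `f^(n)(Xᵢ) = 0` for all `i`. Then
`g(μ_n(X₁, …, X_h)) = μ_{n−1}(f(X₁), …, f(X_h))`. -/
theorem gmap_mooreN
    (p e q h n : ℕ) (hp : p.Prime) (he : 1 ≤ e) (hq : q = p ^ e) (hh : 1 ≤ h) (hn : 2 ≤ n)
    (K : Type*) [Field K] [Fintype K] [DecidableEq K] (hK : Fintype.card K = q)
    (R : Type*) [CommRing R] [Algebra K R]
    (π : R) (u : ℕ → R) (X : Fin h → R)
    (hX : ∀ i, (fmap q h π u)^[n] (X i) = 0) :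
    gmap q h π (mooreN q h n π u X)
      = mooreN q h (n - 1) π u (fun i => fmap q h π u (X i)) :=
  gmap_mooreN_general q h n hh hn K hK R π u X hX
end
end

section
/- In F_q[V_1, …, V_h], D = (−1)^{h−1} ( (V_h^{q^h} − V_h) + B_h + Σ_{i=1}^{h−1} V_i^{q^h} B_{h−i}^{q^i} ), where D is the determinant of the h×h matrix whose first row is (V_1^{q^h} − V_1, …, V_h^{q^h} − V_h) and whose (i,j) entry for 2 ≤ i ≤ h is V_{j−i+1}^{q^{i−1}} (conventions V_0 = 1, V_j = 0 for j < 0). In particular, the hypersurface of Theorem 1.1 is defined by an Artin–Schreier equation in V_h over F_q[V_1, …, V_{h−1}]. -/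
open Finset

noncomputable section

/-- The `(a,b)` entry (0-based) of the matrix `M(W)`, whose 1-based `(i,j)` entry is
`W_{j−i+1}^{q^{i−1}}`, with the convention that entries with negative index vanish. -/
def entryM (q : ℕ) {R : Type*} [CommRing R] (W : ℕ → R) (a b : ℕ) : R :=
  if a ≤ b + 1 then W (b + 1 - a) ^ q ^ a else 0

/-- `δ_i(W) := (−1)^i` times the determinant of the top-left `i×i` submatrix of `M(W)`. -/
def deltaM (q : ℕ) {R : Type*} [CommRing R] (W : ℕ → R) (i : ℕ) : R :=
  (-1) ^ i * Matrix.det (Matrix.of fun a b : Fin i => entryM q W a b)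

/-- The tuple `(V₁, …, V_{h−1})` of variables, extended by `V₀ = 1` and `V_j = 0`
for `j ≥ h`. -/
def vTuple (K : Type*) [Field K] (h : ℕ) : ℕ → MvPolynomial ℕ K := fun j =>
  if j = 0 then 1 else if j ≤ h - 1 then MvPolynomial.X j else 0

/-- The matrix whose first row is `(V₁^{q^h} − V₁, …, V_h^{q^h} − V_h)` and whose
`(i,j)` entry for `2 ≤ i ≤ h` is `V_{j−i+1}^{q^{i−1}}` (with `V₀ = 1`, `V_j = 0` for
`j < 0`); `D` is its determinant. -/
def matD (q : ℕ) (K : Type*) [Field K] (h : ℕ) :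
    Matrix (Fin h) (Fin h) (MvPolynomial ℕ K) :=
  Matrix.of fun a b =>
    if (a : ℕ) = 0 then
      MvPolynomial.X ((b : ℕ) + 1) ^ q ^ h - MvPolynomial.X ((b : ℕ) + 1)
    else entryM q (vTuple K h) a b

/-! Expanding `D` along its first row, the minor obtained by deleting column `j` is block upper
triangular: a unitriangular block of size `j`, and the matrix `M_{h-1-j}(V)` with all entries
raised to the power `q^{j+1}`, which is a ring endomorphism because `q` is a power of the
characteristic. So `D` depends on its first row through the linear form
`r ↦ (-1)^{h-1} Σ_j r_j B_{h-1-j}^{q^{j+1}}`. The first row of `M_h(V)` is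
`(V_1, …, V_{h-1}, 0)`, so the same form computes `B_h`, and evaluating it on
`V_i^{q^h} - V_i` gives the formula. -/

def matM (q : ℕ) {R : Type*} [CommRing R] (W : ℕ → R) (k : ℕ) : Matrix (Fin k) (Fin k) R :=
  Matrix.of fun a b => entryM q W a b

section
variable {R : Type*} [CommRing R]

lemma det_matM (q : ℕ) (W : ℕ → R) (k : ℕ) :
    (matM q W k).det = (-1) ^ k * deltaM q W k := by
  rw [deltaM, ← mul_assoc, ← pow_add, Even.neg_one_pow ⟨k, rfl⟩, one_mul, matM]

lemma deltaM_zero (q : ℕ) (W : ℕ → R) : deltaM q W 0 = 1 := by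
  simp [deltaM]

lemma entryM_add_add {q : ℕ} (hq : q ≠ 0) (W : ℕ → R) (a b c : ℕ) :
    entryM q W (a + c) (b + c) = entryM q W a b ^ q ^ c := by
  unfold entryM
  by_cases h : a ≤ b + 1
  · rw [if_pos (by omega), if_pos h, ← pow_mul, ← pow_add,
      show b + c + 1 - (a + c) = b + 1 - a by omega]
  · rw [if_neg (by omega), if_neg h, zero_pow (pow_ne_zero c hq)]

lemma det_entryM_succ_eq_one (q : ℕ) {W : ℕ → R} (hW0 : W 0 = 1) (k : ℕ) :
    (Matrix.of fun a b : Fin k => entryM q W (a + 1) b).det = 1 := by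
  rw [Matrix.det_of_isUpperTriangular]
  · refine prod_eq_one fun a _ => ?_
    simp [entryM, hW0]
  · intro a b hba
    simp only [Matrix.of_apply, entryM]
    rw [if_neg (by simpa using hba)]

variable {p : ℕ} [ExpChar R p]

lemma det_submatrix_succ_succAbove_matM (n : ℕ) {W : ℕ → R} (hW0 : W 0 = 1) {m : ℕ}
    (j : Fin (m + 1)) :
    ((matM (p ^ n) W (m + 1)).submatrix Fin.succ j.succAbove).det
      = (-1) ^ (m - j) * deltaM (p ^ n) W (m - j) ^ (p ^ n) ^ ((j : ℕ) + 1) := by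
  set φ := iterateFrobenius R p (n * (j + 1))
  have hφ : ∀ x : R, φ x = x ^ (p ^ n) ^ ((j : ℕ) + 1) := fun x => by
    rw [iterateFrobenius_def, pow_mul]
  let e : Fin j ⊕ Fin (m - j) ≃ Fin m := finSumFinEquiv.trans (finCongr (by omega))
  have hblocks : ((matM (p ^ n) W (m + 1)).submatrix Fin.succ j.succAbove).submatrix e e
      = Matrix.fromBlocks (Matrix.of fun a b : Fin j => entryM (p ^ n) W (a + 1) b)
          (Matrix.of fun a (b : Fin (m - j)) => entryM (p ^ n) W (a + 1) (j + b + 1)) 0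
          ((matM (p ^ n) W (m - j)).map φ) := by
    have hcol_inl : ∀ a : Fin j, (j.succAbove (e (.inl a)) : ℕ) = a := fun a => by
      simp [e, Fin.succAbove, Fin.lt_def]
    have hcol_inr : ∀ b : Fin (m - j), (j.succAbove (e (.inr b)) : ℕ) = j + b + 1 := fun b => by
      simp [e, Fin.succAbove, Fin.lt_def]
    have hrow_inl : ∀ a : Fin j, ((e (.inl a)).succ : ℕ) = a + 1 := fun _ => rfl
    have hrow_inr : ∀ a : Fin (m - j), ((e (.inr a)).succ : ℕ) = j + a + 1 := fun _ => rfl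
    ext (a | a) (b | b) <;> simp only [Matrix.submatrix_apply, Matrix.fromBlocks_apply₁₁,
      Matrix.fromBlocks_apply₁₂, Matrix.fromBlocks_apply₂₁, Matrix.fromBlocks_apply₂₂,
      Matrix.map_apply, matM, Matrix.of_apply, Matrix.zero_apply, hcol_inl, hcol_inr, hrow_inl,
      hrow_inr]
    · rw [entryM, if_neg (by omega)]
    · rw [hφ, ← entryM_add_add (pow_ne_zero n (expChar_ne_zero R p))]
      congr 1 <;> omega
  rw [← Matrix.det_submatrix_equiv_self e, hblocks, Matrix.det_fromBlocks_zero₂₁,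
    det_entryM_succ_eq_one _ hW0, one_mul, ← RingHom.mapMatrix_apply, ← RingHom.map_det,
    det_matM, map_mul, map_pow, map_neg, map_one, hφ]

lemma det_updateRow_zero_matM (n : ℕ) {W : ℕ → R} (hW0 : W 0 = 1) (m : ℕ) (r : ℕ → R) :
    ((matM (p ^ n) W (m + 1)).updateRow 0 fun j => r (j + 1)).det
      = (-1) ^ m * ∑ i ∈ Icc 1 (m + 1), r i * deltaM (p ^ n) W (m + 1 - i) ^ (p ^ n) ^ i := by
  have hterm : ∀ j : Fin (m + 1),
      (-1) ^ (j : ℕ) * r (j + 1) *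
          ((matM (p ^ n) W (m + 1)).submatrix Fin.succ j.succAbove).det
        = (-1) ^ m * (r (j + 1) * deltaM (p ^ n) W (m - j) ^ (p ^ n) ^ ((j : ℕ) + 1)) := by
    intro j
    rw [det_submatrix_succ_succAbove_matM n hW0 j]
    have hsign : (-1 : R) ^ (j : ℕ) * (-1) ^ (m - j) = (-1) ^ m := by
      rw [← pow_add, Nat.add_sub_cancel' (Nat.lt_succ_iff.mp j.is_lt)]
    linear_combination (r (j + 1) * deltaM (p ^ n) W (m - j) ^ (p ^ n) ^ ((j : ℕ) + 1)) * hsign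
  have hminor : ∀ j : Fin (m + 1),
      (((matM (p ^ n) W (m + 1)).updateRow 0 fun j => r (j + 1)).submatrix Fin.succ j.succAbove)
        = (matM (p ^ n) W (m + 1)).submatrix Fin.succ j.succAbove := fun j =>
    Matrix.submatrix_updateRow_succAbove _ _ _ 0
  rw [Matrix.det_succ_row_zero]
  simp only [Matrix.updateRow_self, hminor, hterm]
  rw [← mul_sum, ← Ico_add_one_right_eq_Icc, sum_Ico_eq_sum_range,
    Nat.add_sub_cancel, ← Fin.sum_univ_eq_sum_range]
  simp only [add_comm 1, Nat.add_sub_add_right]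

end

lemma vTuple_zero (K : Type*) [Field K] (h : ℕ) : vTuple K h 0 = 1 := rfl

lemma deltaM_vTuple_eq_neg_sum {K : Type*} [Field K] {p : ℕ} [ExpChar K p] (n m : ℕ) :
    deltaM (p ^ n) (vTuple K (m + 1)) (m + 1)
      = -∑ i ∈ Ico 1 (m + 1),
          MvPolynomial.X i * deltaM (p ^ n) (vTuple K (m + 1)) (m + 1 - i) ^ (p ^ n) ^ i := by
  set V := vTuple K (m + 1)
  have hrow : matM (p ^ n) V (m + 1)
      = (matM (p ^ n) V (m + 1)).updateRow 0 fun j => V (j + 1) := by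
    conv_lhs => rw [← Matrix.updateRow_eq_self (matM (p ^ n) V (m + 1)) 0]
    congr 1
    funext j
    simp [matM, entryM]
  have hsign : (-1 : MvPolynomial ℕ K) ^ (m + 1) * (-1) ^ m = -1 := by
    rw [← pow_add, Odd.neg_one_pow ⟨m, by ring⟩]
  have hV : ∀ i ∈ Ico 1 (m + 1), V i = MvPolynomial.X i := fun i hi => by
    simp only [V, vTuple]
    rw [if_neg (by simp at hi; omega), if_pos (by simp at hi; omega)]
  have hVtop : V (m + 1) = 0 := by simp [V, vTuple]
  change (-1) ^ (m + 1) * (matM (p ^ n) V (m + 1)).det = _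
  rw [hrow, det_updateRow_zero_matM n (vTuple_zero K _), ← mul_assoc, hsign,
    ← Ico_add_one_right_eq_Icc, sum_Ico_succ_top (by omega), hVtop, zero_mul, add_zero,
    neg_one_mul, sum_congr rfl fun i hi => by rw [hV i hi]]

lemma matD_eq_updateRow (q : ℕ) (K : Type*) [Field K] (m : ℕ) :
    matD q K (m + 1) = (matM q (vTuple K (m + 1)) (m + 1)).updateRow 0 fun j =>
      MvPolynomial.X ((j : ℕ) + 1) ^ q ^ (m + 1) - MvPolynomial.X ((j : ℕ) + 1) := by
  ext a b
  by_cases ha : a = 0 <;> simp [matD, matM, ha]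

theorem matD_det_artin_schreier_general
    (q h : ℕ) (K : Type*) [Field K] [Fintype K] (hK : Fintype.card K = q) :
    Matrix.det (matD q K h)
      = (-1) ^ (h - 1) *
        ((MvPolynomial.X h ^ q ^ h - MvPolynomial.X h)
          + deltaM q (vTuple K h) h
          + ∑ i ∈ Finset.Ico 1 h,
              MvPolynomial.X i ^ q ^ h * deltaM q (vTuple K h) (h - i) ^ q ^ i) := by
  obtain ⟨n, hp, hcard⟩ := FiniteField.card K (ringChar K)
  obtain rfl : q = ringChar K ^ (n : ℕ) := hK.symm.trans hcard
  have : ExpChar K (ringChar K) := ExpChar.prime hp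
  rcases h with _ | m
  · simp [deltaM_zero]
  rw [matD_eq_updateRow, det_updateRow_zero_matM n (vTuple_zero K _) m
      fun i => MvPolynomial.X i ^ (ringChar K ^ (n : ℕ)) ^ (m + 1) - MvPolynomial.X i,
    deltaM_vTuple_eq_neg_sum,
    Nat.add_sub_cancel, ← Ico_add_one_right_eq_Icc, sum_Ico_succ_top (by omega),
    Nat.sub_self, deltaM_zero, one_pow, mul_one]
  simp only [sub_mul, sum_sub_distrib]
  ring

/-- `D = (−1)^{h−1}((V_h^{q^h} − V_h) + B_h + Σ_{i=1}^{h−1} V_i^{q^h} B_{h−i}^{q^i})`,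
where `B_i = δ_i(V₁, …, V_{h−1})`.  In particular the hypersurface of Theorem 1.1 is
defined by an Artin–Schreier equation in `V_h` over `F_q[V₁, …, V_{h−1}]`. -/
theorem matD_det_artin_schreier
    (p e q h : ℕ) (hp : p.Prime) (he : 1 ≤ e) (hq : q = p ^ e) (hh : 2 ≤ h)
    (K : Type*) [Field K] [Fintype K] (hK : Fintype.card K = q) :
    Matrix.det (matD q K h)
      = (-1) ^ (h - 1) *
        ((MvPolynomial.X h ^ q ^ h - MvPolynomial.X h)
          + deltaM q (vTuple K h) h
          + ∑ i ∈ Finset.Ico 1 h,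
              MvPolynomial.X i ^ q ^ h * deltaM q (vTuple K h) (h - i) ^ q ^ i) :=
  matD_det_artin_schreier_general q h K hK
end
end
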